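/- arXiv:1610.09808 — 7 statements merged into one kernel-verified Lean document; each statement's English description precedes it below -/
import Mathlib

section
/- Let γ : ℝ → ℝ³ be a smooth curve with γ(0) = 0, γ'(0) = 0 and γ''(0) ≠ 0 (an A-type singular point). Define the cuspidal curvature κ_sing = |γ''(0) × γ'''(0)| / |γ''(0)|^{5/2}. Then κ_sing is independent of the choice of parametrization: if φ : ℝ → ℝ is a smooth diffeomorphism-germ with φ(0) = 0 and φ'(0) ≠ 0, then the cuspidal curvature of γ ∘ φ at 0 equals that of γ at 0. -/
noncomputable def n3 (v : Fin 3 → ℝ) : ℝ := Real.sqrt (v 0 ^ 2 + v 1 ^ 2 + v 2 ^ 2)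
noncomputable def cp3 (a b : Fin 3 → ℝ) : Fin 3 → ℝ := crossProduct a b

/-- Cuspidal curvature of a curve at an A-type singular point. -/
noncomputable def cuspCurv (γ : ℝ → Fin 3 → ℝ) : ℝ :=
  n3 (cp3 (iteratedDeriv 2 γ 0) (iteratedDeriv 3 γ 0)) /
    (n3 (iteratedDeriv 2 γ 0)) ^ ((5 : ℝ) / 2)

lemma n3_smul (s : ℝ) (w : Fin 3 → ℝ) : n3 (s • w) = |s| * n3 w := by
  unfold n3
  simp only [Pi.smul_apply, smul_eq_mul]
  rw [show (s * w 0) ^ 2 + (s * w 1) ^ 2 + (s * w 2) ^ 2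
      = s ^ 2 * (w 0 ^ 2 + w 1 ^ 2 + w 2 ^ 2) by ring,
    Real.sqrt_mul (sq_nonneg s), Real.sqrt_sq_eq_abs]

lemma n3_nonneg (w : Fin 3 → ℝ) : 0 ≤ n3 w := Real.sqrt_nonneg _

theorem stmt0 (γ : ℝ → Fin 3 → ℝ) (hγ : ContDiff ℝ (⊤ : ℕ∞) γ)
    (h0 : γ 0 = 0) (h1 : deriv γ 0 = 0) (h2 : iteratedDeriv 2 γ 0 ≠ 0)
    (φ : ℝ → ℝ) (hφ : ContDiff ℝ (⊤ : ℕ∞) φ) (hφ0 : φ 0 = 0) (hφ1 : deriv φ 0 ≠ 0) :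
    cuspCurv (γ ∘ φ) = cuspCurv γ := by
  -- smoothness bookkeeping
  have hle : ((⊤ : ℕ∞) : WithTop ℕ∞) ≠ 0 := by simp
  have hγ0 : ContDiff ℝ (⊤ : ℕ∞) γ := hγ.of_le (by simp)
  have hγ1 : ContDiff ℝ (⊤ : ℕ∞) (deriv γ) := (contDiff_infty_iff_deriv.mp hγ0).2
  have hγ2 : ContDiff ℝ (⊤ : ℕ∞) (deriv (deriv γ)) := (contDiff_infty_iff_deriv.mp hγ1).2
  have hφ0' : ContDiff ℝ (⊤ : ℕ∞) φ := hφ.of_le (by simp)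
  have hφ1' : ContDiff ℝ (⊤ : ℕ∞) (deriv φ) := (contDiff_infty_iff_deriv.mp hφ0').2
  have hφ2' : ContDiff ℝ (⊤ : ℕ∞) (deriv (deriv φ)) := (contDiff_infty_iff_deriv.mp hφ1').2
  set c : ℝ := deriv φ 0 with hc
  set b : ℝ := deriv (deriv φ) 0 with hb
  set u : Fin 3 → ℝ := iteratedDeriv 2 γ 0 with hu
  set v : Fin 3 → ℝ := iteratedDeriv 3 γ 0 with hv
  have hu' : deriv (deriv γ) 0 = u := by rw [hu, iteratedDeriv_succ, iteratedDeriv_one]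
  have hv' : deriv (deriv (deriv γ)) 0 = v := by
    rw [hv, iteratedDeriv_succ, iteratedDeriv_succ, iteratedDeriv_one]
  -- first derivative of γ ∘ φ
  have e1 : deriv (γ ∘ φ) = fun t => deriv φ t • deriv γ (φ t) := by
    funext t
    exact ((hγ0.differentiable hle (φ t)).hasDerivAt.scomp t
      (hφ0'.differentiable hle t).hasDerivAt).deriv
  -- second derivative of γ ∘ φ
  have e2 : deriv (deriv (γ ∘ φ)) = fun t =>
      deriv φ t • (deriv φ t • deriv (deriv γ) (φ t)) + deriv (deriv φ) t • deriv γ (φ t) := by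
    funext t
    rw [e1]
    have hchain : HasDerivAt (fun s => deriv γ (φ s)) (deriv φ t • deriv (deriv γ) (φ t)) t :=
      (hγ1.differentiable hle (φ t)).hasDerivAt.scomp t
        (hφ0'.differentiable hle t).hasDerivAt
    exact ((hφ1'.differentiable hle t).hasDerivAt.smul hchain).deriv
  -- values at 0
  have w2 : iteratedDeriv 2 (γ ∘ φ) 0 = (c ^ 2) • u := by
    rw [iteratedDeriv_succ, iteratedDeriv_one, e2]
    simp only [hφ0, h1, hu', smul_zero, add_zero, smul_smul]
    rw [sq]
  -- third derivative at 0
  have w3 : iteratedDeriv 3 (γ ∘ φ) 0 = (c ^ 3) • v + (3 * c * b) • u := by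
    rw [iteratedDeriv_succ, iteratedDeriv_succ, iteratedDeriv_one, e2]
    have hA : HasDerivAt (fun s => deriv φ s • (deriv φ s • deriv (deriv γ) (φ s)))
        (c • (b • u + c • (c • v)) + b • (c • u)) 0 := by
      have hinner : HasDerivAt (fun s => deriv φ s • deriv (deriv γ) (φ s))
          (c • (c • v) + b • u) 0 := by
        have hch : HasDerivAt (fun s => deriv (deriv γ) (φ s)) (c • v) 0 := by
          have := (hγ2.differentiable hle (φ 0)).hasDerivAt.scomp 0
            (hφ0'.differentiable hle 0).hasDerivAt
          rw [hφ0, hv'] at this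
          exact this
        have h := (hφ1'.differentiable hle 0).hasDerivAt.smul hch
        rw [hφ0, hu'] at h
        exact h
      have := (hφ1'.differentiable hle 0).hasDerivAt.smul hinner
      have e : (c • (b • u + c • (c • v)) + b • (c • u)) = deriv φ 0 • (c • c • v + b • u)
          + deriv (deriv φ) 0 • deriv φ 0 • deriv (deriv γ) (φ 0) := by
        rw [hφ0, hu']
        module
      rw [e]
      exact this
    have hB : HasDerivAt (fun s => deriv (deriv φ) s • deriv γ (φ s))
        (b • (c • u) + deriv (deriv (deriv φ)) 0 • deriv γ 0) 0 := by
      have hch : HasDerivAt (fun s => deriv γ (φ s)) (c • u) 0 := by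
        have := (hγ1.differentiable hle (φ 0)).hasDerivAt.scomp 0
          (hφ0'.differentiable hle 0).hasDerivAt
        rw [hφ0, hu'] at this
        exact this
      have h := (hφ2'.differentiable hle 0).hasDerivAt.smul hch
      rw [hφ0] at h
      exact h
    have := (hA.add hB).deriv
    rw [show deriv (fun t => deriv φ t • deriv φ t • deriv (deriv γ) (φ t) + deriv (deriv φ) t • deriv γ (φ t)) 0 = _ from this, h1]
    module
  -- cross product computation
  have key : cp3 (iteratedDeriv 2 (γ ∘ φ) 0) (iteratedDeriv 3 (γ ∘ φ) 0)
      = (c ^ 5) • cp3 u v := by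
    rw [w2, w3]
    simp only [cp3, map_smul, map_add, LinearMap.smul_apply, LinearMap.add_apply,
      cross_self, smul_zero, add_zero, smul_smul, smul_add]
    congr 1
    ring
  -- norms
  have hn2 : n3 (iteratedDeriv 2 (γ ∘ φ) 0) = c ^ 2 * n3 u := by
    rw [w2, n3_smul, abs_of_nonneg (sq_nonneg c)]
  unfold cuspCurv
  rw [key, hn2, n3_smul, Real.mul_rpow (sq_nonneg c) (n3_nonneg u)]
  have hcsq : (c ^ 2 : ℝ) ^ ((5 : ℝ) / 2) = |c| ^ (5 : ℕ) := by
    rw [← sq_abs, ← Real.rpow_natCast |c| 2, ← Real.rpow_mul (abs_nonneg c),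
      ← Real.rpow_natCast |c| 5]
    norm_num
  rw [hcsq, abs_pow]
  have hc5 : |c| ^ (5:ℕ) ≠ 0 := pow_ne_zero _ (abs_ne_zero.mpr hφ1)
  rw [mul_div_mul_left _ _ hc5]
end

section
/- Let γ : ℝ → ℝ³ be a smooth curve with γ'(0) = 0 and γ''(0) × γ'''(0) ≠ 0 (a (2,3)-type singular point). Define the cuspidal torsion τ_sing = √|γ''(0)| · det(γ''(0), γ'''(0), γ''''(0)) / |γ''(0) × γ'''(0)|². Then τ_sing is invariant under orientation-preserving smooth reparametrizations φ with φ(0) = 0 and φ'(0) > 0. -/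
noncomputable def det3 (a b c : Fin 3 → ℝ) : ℝ :=
  Matrix.det !![a 0, b 0, c 0; a 1, b 1, c 1; a 2, b 2, c 2]

/-- Cuspidal torsion of a curve at a (2,3)-type singular point. -/
noncomputable def cuspTors (γ : ℝ → Fin 3 → ℝ) : ℝ :=
  Real.sqrt (n3 (iteratedDeriv 2 γ 0)) *
    det3 (iteratedDeriv 2 γ 0) (iteratedDeriv 3 γ 0) (iteratedDeriv 4 γ 0) /
      (n3 (cp3 (iteratedDeriv 2 γ 0) (iteratedDeriv 3 γ 0))) ^ 2

private lemma sderiv {E : Type*} [NormedAddCommGroup E] [NormedSpace ℝ E] {f : ℝ → E}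
    (hf : ContDiff ℝ (⊤ : ℕ∞) f) : ContDiff ℝ (⊤ : ℕ∞) (deriv f) :=
  (contDiff_infty_iff_deriv.mp hf).2

private lemma hd {E : Type*} [NormedAddCommGroup E] [NormedSpace ℝ E] {f : ℝ → E}
    (hf : ContDiff ℝ (⊤ : ℕ∞) f) (t : ℝ) : HasDerivAt f (deriv f t) t :=
  (hf.differentiable (by simp) t).hasDerivAt

set_option maxHeartbeats 1000000 in
theorem stmt1 (γ : ℝ → Fin 3 → ℝ) (hγ : ContDiff ℝ (⊤ : ℕ∞) γ)
    (h1 : deriv γ 0 = 0)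
    (h2 : cp3 (iteratedDeriv 2 γ 0) (iteratedDeriv 3 γ 0) ≠ 0)
    (φ : ℝ → ℝ) (hφ : ContDiff ℝ (⊤ : ℕ∞) φ) (hφ0 : φ 0 = 0) (hφ1 : deriv φ 0 > 0) :
    cuspTors (γ ∘ φ) = cuspTors γ := by
  have hγ' : ContDiff ℝ (⊤ : ℕ∞) γ := hγ.of_le (by simp)
  have hφ' : ContDiff ℝ (⊤ : ℕ∞) φ := hφ.of_le (by simp)
  set g1 := deriv γ with hg1
  set g2 := deriv g1 with hg2
  set g3 := deriv g2 with hg3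
  set g4 := deriv g3 with hg4
  set p1 := deriv φ with hp1
  set p2 := deriv p1 with hp2
  set p3 := deriv p2 with hp3
  set p4 := deriv p3 with hp4
  have sg1 := sderiv hγ'
  have sg2 := sderiv sg1
  have sg3 := sderiv sg2
  have sp1 := sderiv hφ'
  have sp2 := sderiv sp1
  have sp3 := sderiv sp2
  -- first derivative
  have E1 : deriv (γ ∘ φ) = fun t => p1 t • g1 (φ t) := by
    funext t
    exact ((hd hγ' (φ t)).scomp t (hd hφ' t)).deriv
  -- second derivative
  have E2 : deriv (fun t => p1 t • g1 (φ t)) =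
      fun t => p2 t • g1 (φ t) + (p1 t * p1 t) • g2 (φ t) := by
    funext t
    have h : HasDerivAt (fun t => p1 t • g1 (φ t))
        (p1 t • (p1 t • g2 (φ t)) + p2 t • g1 (φ t)) t :=
      (hd sp1 t).smul ((hd sg1 (φ t)).scomp t (hd hφ' t))
    rw [h.deriv]; module
  -- third derivative
  have E3 : deriv (fun t => p2 t • g1 (φ t) + (p1 t * p1 t) • g2 (φ t)) =
      fun t => p3 t • g1 (φ t) + (3 * (p1 t * p2 t)) • g2 (φ t)
        + (p1 t * p1 t * p1 t) • g3 (φ t) := by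
    funext t
    have ha : HasDerivAt (fun t => p2 t • g1 (φ t))
        (p2 t • (p1 t • g2 (φ t)) + p3 t • g1 (φ t)) t :=
      (hd sp2 t).smul ((hd sg1 (φ t)).scomp t (hd hφ' t))
    have hb : HasDerivAt (fun t => (p1 t * p1 t) • g2 (φ t))
        ((p1 t * p1 t) • (p1 t • g3 (φ t)) + (p2 t * p1 t + p1 t * p2 t) • g2 (φ t)) t :=
      ((hd sp1 t).mul (hd sp1 t)).smul ((hd sg2 (φ t)).scomp t (hd hφ' t))
    exact (ha.add hb).deriv.trans (by module)
  -- fourth derivative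
  have E4 : deriv (fun t => p3 t • g1 (φ t) + (3 * (p1 t * p2 t)) • g2 (φ t)
        + (p1 t * p1 t * p1 t) • g3 (φ t)) =
      fun t => p4 t • g1 (φ t) + (4 * (p1 t * p3 t) + 3 * (p2 t * p2 t)) • g2 (φ t)
        + (6 * (p1 t * p1 t * p2 t)) • g3 (φ t)
        + (p1 t * p1 t * p1 t * p1 t) • g4 (φ t) := by
    funext t
    have ha : HasDerivAt (fun t => p3 t • g1 (φ t))
        (p3 t • (p1 t • g2 (φ t)) + p4 t • g1 (φ t)) t :=
      (hd sp3 t).smul ((hd sg1 (φ t)).scomp t (hd hφ' t))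
    have hb : HasDerivAt (fun t => (3 * (p1 t * p2 t)) • g2 (φ t))
        ((3 * (p1 t * p2 t)) • (p1 t • g3 (φ t))
          + (3 * (p2 t * p2 t + p1 t * p3 t)) • g2 (φ t)) t :=
      (((hd sp1 t).mul (hd sp2 t)).const_mul 3).smul ((hd sg2 (φ t)).scomp t (hd hφ' t))
    have hc : HasDerivAt (fun t => (p1 t * p1 t * p1 t) • g3 (φ t))
        ((p1 t * p1 t * p1 t) • (p1 t • g4 (φ t))
          + ((p2 t * p1 t + p1 t * p2 t) * p1 t + p1 t * p1 t * p2 t) • g3 (φ t)) t :=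
      (((hd sp1 t).mul (hd sp1 t)).mul (hd sp1 t)).smul ((hd sg3 (φ t)).scomp t (hd hφ' t))
    exact ((ha.add hb).add hc).deriv.trans (by module)
  -- values of the iterated derivatives at 0
  set c := p1 0 with hc0
  set b := p2 0 with hb0
  set d := p3 0 with hd0
  set e := p4 0 with he0
  set A := g2 0 with hA
  set B := g3 0 with hB
  set C := g4 0 with hC
  have iγ2 : iteratedDeriv 2 γ 0 = A := by
    simp only [iteratedDeriv_succ, iteratedDeriv_zero, ← hg1, ← hg2, ← hA]
  have iγ3 : iteratedDeriv 3 γ 0 = B := by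
    simp only [iteratedDeriv_succ, iteratedDeriv_zero, ← hg1, ← hg2, ← hg3, ← hB]
  have iγ4 : iteratedDeriv 4 γ 0 = C := by
    simp only [iteratedDeriv_succ, iteratedDeriv_zero, ← hg1, ← hg2, ← hg3, ← hg4, ← hC]
  have hg10 : g1 0 = 0 := h1
  have iφ2 : iteratedDeriv 2 (γ ∘ φ) 0 = (c * c) • A := by
    simp only [iteratedDeriv_succ, iteratedDeriv_zero]
    rw [E1, E2]
    simp [hφ0, hg10, ← hc0, ← hA]
  have iφ3 : iteratedDeriv 3 (γ ∘ φ) 0 = (3 * (c * b)) • A + (c * c * c) • B := by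
    simp only [iteratedDeriv_succ, iteratedDeriv_zero]
    rw [E1, E2, E3]
    simp [hφ0, hg10, ← hc0, ← hb0, ← hA, ← hB]
  have iφ4 : iteratedDeriv 4 (γ ∘ φ) 0 = (4 * (c * d) + 3 * (b * b)) • A
      + (6 * (c * c * b)) • B + (c * c * c * c) • C := by
    simp only [iteratedDeriv_succ, iteratedDeriv_zero]
    rw [E1, E2, E3, E4]
    simp [hφ0, hg10, ← hc0, ← hb0, ← hd0, ← hA, ← hB, ← hC]
  have hcpos : (0 : ℝ) < c := hφ1
  -- now pure algebra
  unfold cuspTors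
  rw [iγ2, iγ3, iγ4, iφ2, iφ3, iφ4]
  have hn2 : n3 ((c * c) • A) = (c * c) * n3 A := by
    unfold n3
    rw [show ((c*c) • A) 0 ^ 2 + ((c*c) • A) 1 ^ 2 + ((c*c) • A) 2 ^ 2
        = (c*c)^2 * (A 0 ^ 2 + A 1 ^ 2 + A 2 ^ 2) by
        simp only [Pi.smul_apply, smul_eq_mul]; ring,
      Real.sqrt_mul (sq_nonneg _), Real.sqrt_sq (by positivity)]
  have hdet : det3 ((c * c) • A) ((3 * (c * b)) • A + (c * c * c) • B)
      ((4 * (c * d) + 3 * (b * b)) • A + (6 * (c * c * b)) • B + (c * c * c * c) • C)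
      = c ^ 9 * det3 A B C := by
    unfold det3
    simp only [Matrix.det_fin_three, Matrix.cons_val', Matrix.cons_val_zero, Matrix.cons_val_one,
      Matrix.head_cons, Matrix.empty_val', Matrix.cons_val_fin_one, Matrix.head_fin_const,
      Matrix.cons_val_two, Matrix.tail_cons, Matrix.of_apply, Pi.add_apply, Pi.smul_apply,
      smul_eq_mul]
    ring
  have hcp : cp3 ((c * c) • A) ((3 * (c * b)) • A + (c * c * c) • B)
      = (c ^ 5) • cp3 A B := by
    unfold cp3
    rw [cross_apply, cross_apply]
    funext i
    fin_cases i <;>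
      simp [Pi.add_apply, Pi.smul_apply, smul_eq_mul, Matrix.of_apply] <;> ring
  have hncp : n3 ((c ^ 5) • cp3 A B) = c ^ 5 * n3 (cp3 A B) := by
    unfold n3
    rw [show ((c^5) • cp3 A B) 0 ^ 2 + ((c^5) • cp3 A B) 1 ^ 2 + ((c^5) • cp3 A B) 2 ^ 2
        = (c^5)^2 * ((cp3 A B) 0 ^ 2 + (cp3 A B) 1 ^ 2 + (cp3 A B) 2 ^ 2) by
        simp only [Pi.smul_apply, smul_eq_mul]; ring,
      Real.sqrt_mul (sq_nonneg _), Real.sqrt_sq (by positivity)]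
  rw [hn2, hdet, hcp, hncp]
  have hs : Real.sqrt (c * c * n3 A) = c * Real.sqrt (n3 A) := by
    rw [show c * c = c ^ 2 by ring, Real.sqrt_mul (sq_nonneg _), Real.sqrt_sq hcpos.le]
  rw [hs, show c * Real.sqrt (n3 A) * (c ^ 9 * det3 A B C)
      = c ^ 10 * (Real.sqrt (n3 A) * det3 A B C) by ring,
    show (c ^ 5 * n3 (cp3 A B)) ^ 2 = c ^ 10 * n3 (cp3 A B) ^ 2 by ring]
  exact mul_div_mul_left _ _ (by positivity)
end

section
/- Let γ : ℝ → ℝ³ be smooth with γ'(0) = 0 and γ''(0) × γ'''(0) ≠ 0. Then lim_{t→0} |γ'(t) × γ''(t)|² / t⁴ = |γ''(0) × γ'''(0)|² / 4. -/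
open Filter

lemma hasD (f : ℝ → ℝ) (hf : ContDiff ℝ (⊤ : ℕ∞) f) (n : ℕ) (t : ℝ) :
    HasDerivAt (iteratedDeriv n f) (iteratedDeriv (n+1) f t) t := by
  rw [iteratedDeriv_succ]
  exact ((hf.differentiable_iteratedDeriv n (WithTop.coe_lt_coe.2 (ENat.coe_lt_top n))) t).hasDerivAt

lemma slopeQ (f : ℝ → ℝ) (hf : ContDiff ℝ (⊤ : ℕ∞) f) (n : ℕ) :
    Tendsto (fun t => (iteratedDeriv n f t - iteratedDeriv n f 0) / t)
      (nhdsWithin 0 {(0:ℝ)}ᶜ) (nhds (iteratedDeriv (n+1) f 0)) := by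
  have h := (hasDerivAt_iff_tendsto_slope).1 (hasD f hf n 0)
  refine h.congr' ?_
  filter_upwards [self_mem_nhdsWithin] with t ht
  simp [slope_def_field]

lemma lemR (f : ℝ → ℝ) (hf : ContDiff ℝ (⊤ : ℕ∞) f) (h0 : deriv f 0 = 0) :
    Tendsto (fun t => (deriv f t - t * iteratedDeriv 2 f 0) / t ^ 2)
      (nhdsWithin 0 {(0:ℝ)}ᶜ) (nhds (iteratedDeriv 3 f 0 / 2)) := by
  have hA : ∀ t, HasDerivAt (fun t => deriv f t - t * iteratedDeriv 2 f 0)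
      (iteratedDeriv 2 f t - iteratedDeriv 2 f 0) t := by
    intro t
    have h1 : HasDerivAt (deriv f) (iteratedDeriv 2 f t) t := by
      simpa [iteratedDeriv_one] using hasD f hf 1 t
    exact (h1.sub ((hasDerivAt_id' t).mul_const (iteratedDeriv 2 f 0))).congr_deriv (by simp)
  apply HasDerivAt.lhopital_zero_nhdsNE (f' := fun t => iteratedDeriv 2 f t - iteratedDeriv 2 f 0)
    (g' := fun t => 2 * t)
  · filter_upwards with t using hA t
  · filter_upwards with t using by simpa [mul_comm] using (hasDerivAt_pow 2 t)
  · filter_upwards [self_mem_nhdsWithin] with t ht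
    simpa using ht
  · have : ContinuousAt (fun t => deriv f t - t * iteratedDeriv 2 f 0) 0 := (hA 0).continuousAt
    have h2 := this.tendsto.mono_left (nhdsWithin_le_nhds (s:={(0:ℝ)}ᶜ))
    simpa [h0] using h2
  · have : Tendsto (fun t : ℝ => t ^ 2) (nhds 0) (nhds 0) := by
      simpa using (continuous_pow 2).tendsto (0:ℝ)
    exact this.mono_left nhdsWithin_le_nhds
  · have h := (slopeQ f hf 2).div_const 2
    norm_num at h
    exact h.congr fun t => by rw [div_div, mul_comm]

lemma key (f g : ℝ → ℝ) (hf : ContDiff ℝ (⊤ : ℕ∞) f) (hg : ContDiff ℝ (⊤ : ℕ∞) g)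
    (hf0 : deriv f 0 = 0) (hg0 : deriv g 0 = 0) :
    Tendsto (fun t => (deriv f t * iteratedDeriv 2 g t - deriv g t * iteratedDeriv 2 f t) / t ^ 2)
      (nhdsWithin 0 {(0:ℝ)}ᶜ)
      (nhds ((iteratedDeriv 2 f 0 * iteratedDeriv 3 g 0
        - iteratedDeriv 2 g 0 * iteratedDeriv 3 f 0) / 2)) := by
  set A := iteratedDeriv 2 f 0 with hA
  set B := iteratedDeriv 3 f 0 with hB
  set C := iteratedDeriv 2 g 0 with hC
  set D := iteratedDeriv 3 g 0 with hD
  set Rf : ℝ → ℝ := fun t => (deriv f t - t * A) / t ^ 2 with hRf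
  set Rg : ℝ → ℝ := fun t => (deriv g t - t * C) / t ^ 2 with hRg
  set Qf : ℝ → ℝ := fun t => (iteratedDeriv 2 f t - A) / t with hQf
  set Qg : ℝ → ℝ := fun t => (iteratedDeriv 2 g t - C) / t with hQg
  have tQf : Tendsto Qf (nhdsWithin 0 {(0:ℝ)}ᶜ) (nhds B) := by
    have := slopeQ f hf 2; norm_num at this; exact this
  have tQg : Tendsto Qg (nhdsWithin 0 {(0:ℝ)}ᶜ) (nhds D) := by
    have := slopeQ g hg 2; norm_num at this; exact this
  have tRf : Tendsto Rf (nhdsWithin 0 {(0:ℝ)}ᶜ) (nhds (B / 2)) := lemR f hf hf0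
  have tRg : Tendsto Rg (nhdsWithin 0 {(0:ℝ)}ᶜ) (nhds (D / 2)) := lemR g hg hg0
  have tid : Tendsto (fun t : ℝ => t) (nhdsWithin 0 {(0:ℝ)}ᶜ) (nhds 0) :=
    tendsto_id.mono_left nhdsWithin_le_nhds
  have big : Tendsto (fun t => A * Qg t + C * Rf t + t * (Rf t * Qg t)
      - (C * Qf t + A * Rg t + t * (Rg t * Qf t))) (nhdsWithin 0 {(0:ℝ)}ᶜ)
      (nhds (A * D + C * (B / 2) + 0 * (B / 2 * D) - (C * B + A * (D / 2) + 0 * (D / 2 * B)))) := by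
    exact (((tendsto_const_nhds.mul tQg).add (tendsto_const_nhds.mul tRf)).add
        (tid.mul (tRf.mul tQg))).sub
      (((tendsto_const_nhds.mul tQf).add (tendsto_const_nhds.mul tRg)).add
        (tid.mul (tRg.mul tQf)))
  have heq : (A * D + C * (B / 2) + 0 * (B / 2 * D) - (C * B + A * (D / 2) + 0 * (D / 2 * B)))
      = (A * D - C * B) / 2 := by ring
  rw [heq] at big
  refine big.congr' ?_
  filter_upwards [self_mem_nhdsWithin] with t ht
  have ht' : t ≠ 0 := ht
  simp only [hRf, hRg, hQf, hQg]
  field_simp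
  ring

lemma proj_deriv (F : ℝ → Fin 3 → ℝ) (t : ℝ) (hF : DifferentiableAt ℝ F t) (i : Fin 3) :
    deriv (fun s => F s i) t = deriv F t i :=
  (hasDerivAt_pi.1 hF.hasDerivAt i).deriv

lemma comp_iter (γ : ℝ → Fin 3 → ℝ) (hγ : ContDiff ℝ (⊤ : ℕ∞) γ) (n : ℕ) (i : Fin 3) (t : ℝ) :
    iteratedDeriv n (fun s => γ s i) t = iteratedDeriv n γ t i := by
  induction n generalizing t with
  | zero => simp
  | succ n ih =>
    rw [iteratedDeriv_succ, iteratedDeriv_succ,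
      ← proj_deriv _ t ((hγ.differentiable_iteratedDeriv n (WithTop.coe_lt_coe.2 (ENat.coe_lt_top n))) t) i]
    congr 1
    funext s
    exact ih s

theorem stmt3 (γ : ℝ → Fin 3 → ℝ) (hγ : ContDiff ℝ (⊤ : ℕ∞) γ)
    (h1 : deriv γ 0 = 0)
    (h2 : cp3 (iteratedDeriv 2 γ 0) (iteratedDeriv 3 γ 0) ≠ 0) :
    Tendsto (fun t => (n3 (cp3 (deriv γ t) (iteratedDeriv 2 γ t))) ^ 2 / t ^ 4)
      (nhdsWithin 0 {(0 : ℝ)}ᶜ)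
      (nhds ((n3 (cp3 (iteratedDeriv 2 γ 0) (iteratedDeriv 3 γ 0))) ^ 2 / 4)) := by
  have hdiff : Differentiable ℝ γ := hγ.differentiable (by simp)
  set a := iteratedDeriv 2 γ 0 with ha
  set b := iteratedDeriv 3 γ 0 with hb
  have hfi : ∀ i, ContDiff ℝ (⊤ : ℕ∞) (fun s => γ s i) := fun i => contDiff_pi.1 hγ i
  have hfi0 : ∀ i, deriv (fun s => γ s i) 0 = 0 := fun i => by
    rw [proj_deriv γ 0 (hdiff 0) i, h1]; rfl
  have keyc : ∀ i j : Fin 3, Tendsto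
      (fun t => (deriv γ t i * iteratedDeriv 2 γ t j
        - deriv γ t j * iteratedDeriv 2 γ t i) / t ^ 2)
      (nhdsWithin 0 {(0:ℝ)}ᶜ) (nhds ((a i * b j - a j * b i) / 2)) := by
    intro i j
    have h := key _ _ (hfi i) (hfi j) (hfi0 i) (hfi0 j)
    have hc : (iteratedDeriv 2 (fun s => γ s i) 0 * iteratedDeriv 3 (fun s => γ s j) 0
        - iteratedDeriv 2 (fun s => γ s j) 0 * iteratedDeriv 3 (fun s => γ s i) 0) / 2
        = (a i * b j - a j * b i) / 2 := by
      rw [comp_iter γ hγ 2, comp_iter γ hγ 3, comp_iter γ hγ 2, comp_iter γ hγ 3]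
    rw [hc] at h
    refine h.congr fun t => ?_
    rw [proj_deriv γ t (hdiff t) i, proj_deriv γ t (hdiff t) j,
      comp_iter γ hγ 2 i t, comp_iter γ hγ 2 j t]
  set v : ℝ → Fin 3 → ℝ := fun t => cp3 (deriv γ t) (iteratedDeriv 2 γ t) with hv
  have hT0 : Tendsto (fun t => v t 0 / t ^ 2) (nhdsWithin 0 {(0:ℝ)}ᶜ)
      (nhds ((a 1 * b 2 - a 2 * b 1) / 2)) :=
    (keyc 1 2).congr fun t => by simp [hv, cp3, cross_apply]
  have hT1 : Tendsto (fun t => v t 1 / t ^ 2) (nhdsWithin 0 {(0:ℝ)}ᶜ)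
      (nhds ((a 2 * b 0 - a 0 * b 2) / 2)) :=
    (keyc 2 0).congr fun t => by simp [hv, cp3, cross_apply]
  have hT2 : Tendsto (fun t => v t 2 / t ^ 2) (nhdsWithin 0 {(0:ℝ)}ᶜ)
      (nhds ((a 0 * b 1 - a 1 * b 0) / 2)) :=
    (keyc 0 1).congr fun t => by simp [hv, cp3, cross_apply]
  have sum := ((hT0.pow 2).add (hT1.pow 2)).add (hT2.pow 2)
  have hcc : ((a 1 * b 2 - a 2 * b 1) / 2) ^ 2 + ((a 2 * b 0 - a 0 * b 2) / 2) ^ 2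
      + ((a 0 * b 1 - a 1 * b 0) / 2) ^ 2 = n3 (cp3 a b) ^ 2 / 4 := by
    have hn : n3 (cp3 a b) ^ 2 = (cp3 a b 0) ^ 2 + (cp3 a b 1) ^ 2 + (cp3 a b 2) ^ 2 := by
      rw [n3, Real.sq_sqrt (by positivity)]
    rw [hn]
    simp [cp3, cross_apply]
    ring
  rw [hcc] at sum
  refine sum.congr' ?_
  filter_upwards [self_mem_nhdsWithin] with t ht
  have ht' : (t : ℝ) ≠ 0 := ht
  have hn : n3 (v t) ^ 2 = (v t 0) ^ 2 + (v t 1) ^ 2 + (v t 2) ^ 2 := by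
    rw [n3, Real.sq_sqrt (by positivity)]
  rw [div_pow, div_pow, div_pow]
  rw [show (t^2)^2 = t^4 by ring, ← add_div, ← add_div, ← hn]
end

section
/- Let f(u,v) = (u, a₂₀u²/2 + a₃₀u³/6 + v²/2 + u⁴h₁(u), b₂₀u²/2 + b₃₀u³/6 + b₁₂uv²/2 + b₀₃v³/6 + u⁴h₂(u) + u²v²h₃(u) + uv³h₄(u) + v⁴h₅(u,v)) be the normal form of a cuspidal edge, and let b(u) = (εu, c₁u + c₂u²/2 + c₃u³/6 + u⁴c(u)) with ε = ±1 be a boundary curve transverse to ker df₀. Set b̂ = f ∘ b. Then the curvature of the space curve b̂ at u = 0 is κ(0) = √(b₂₀² + (c₁² + a₂₀)²). -/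
open scoped ContDiff in
lemma key_s15 (A B : ℝ) (T g : ℝ → ℝ) (hT : ContDiff ℝ (⊤ : ℕ∞) T)
    (hg : ∀ u, g u = A * u + B * u ^ 2 / 2 + u ^ 3 * T u) :
    ∃ g' : ℝ → ℝ, (∀ u, HasDerivAt g (g' u) u) ∧ HasDerivAt g' B 0 ∧ g' 0 = A := by
  have hTi : ContDiff ℝ ∞ T := hT.of_le (by simp)
  have hT' : ContDiff ℝ ∞ (deriv T) := (contDiff_infty_iff_deriv.mp hTi).2
  refine ⟨fun u => A + B * u + (3 * u ^ 2 * T u + u ^ 3 * deriv T u), ?_, ?_, by norm_num⟩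
  · intro u
    have hge : g = fun u => A * u + B * u ^ 2 / 2 + u ^ 3 * T u := funext hg
    rw [hge]
    have hTd : HasDerivAt T (deriv T u) u := (hT.differentiable (by simp) u).hasDerivAt
    have h := (((hasDerivAt_id u).const_mul A).add
        (((hasDerivAt_pow 2 u).const_mul B).div_const 2)).add
        ((hasDerivAt_pow 3 u).mul hTd)
    refine h.congr_deriv ?_
    push_cast
    ring
  · have hTd : HasDerivAt T (deriv T 0) 0 := (hT.differentiable (by simp) 0).hasDerivAt
    have hTd' : HasDerivAt (deriv T) (deriv (deriv T) 0) 0 :=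
      (hT'.differentiable (by simp) 0).hasDerivAt
    have h := ((hasDerivAt_const 0 A).add ((hasDerivAt_id 0).const_mul B)).add
        ((((hasDerivAt_pow 2 0).const_mul 3).mul hTd).add ((hasDerivAt_pow 3 0).mul hTd'))
    refine h.congr_deriv ?_
    push_cast
    ring



theorem stmt15 (a20 a30 b20 b30 b12 b03 ε c1 c2 c3 : ℝ)
    (h1 h2 h3 h4 : ℝ → ℝ) (h5 : ℝ × ℝ → ℝ) (c : ℝ → ℝ)
    (hsm1 : ContDiff ℝ (⊤ : ℕ∞) h1) (hsm2 : ContDiff ℝ (⊤ : ℕ∞) h2) (hsm3 : ContDiff ℝ (⊤ : ℕ∞) h3)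
    (hsm4 : ContDiff ℝ (⊤ : ℕ∞) h4) (hsm5 : ContDiff ℝ (⊤ : ℕ∞) h5) (hsmc : ContDiff ℝ (⊤ : ℕ∞) c)
    (hb03 : b03 ≠ 0) (hb20 : 0 ≤ b20) (hε : ε = 1 ∨ ε = -1)
    (f : ℝ × ℝ → Fin 3 → ℝ)
    (hf : ∀ u v, f (u, v) =
      ![u,
        a20 * u ^ 2 / 2 + a30 * u ^ 3 / 6 + v ^ 2 / 2 + u ^ 4 * h1 u,
        b20 * u ^ 2 / 2 + b30 * u ^ 3 / 6 + b12 * u * v ^ 2 / 2 + b03 * v ^ 3 / 6 +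
          u ^ 4 * h2 u + u ^ 2 * v ^ 2 * h3 u + u * v ^ 3 * h4 u + v ^ 4 * h5 (u, v)])
    (b : ℝ → ℝ × ℝ)
    (hb : ∀ u, b u = (ε * u, c1 * u + c2 * u ^ 2 / 2 + c3 * u ^ 3 / 6 + u ^ 4 * c u))
    (bh : ℝ → Fin 3 → ℝ) (hbh : ∀ u, bh u = f (b u)) :
    n3 (cp3 (deriv bh 0) (iteratedDeriv 2 bh 0)) / (n3 (deriv bh 0)) ^ 3 =
      Real.sqrt (b20 ^ 2 + (c1 ^ 2 + a20) ^ 2) := by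
  have hε2 : ε ^ 2 = 1 := by rcases hε with rfl | rfl <;> norm_num
  set BY : ℝ := a20 * ε ^ 2 + c1 ^ 2 with hBY
  set BZ : ℝ := b20 * ε ^ 2 with hBZ
  set TYf : ℝ → ℝ := fun u =>
    a30 * ε ^ 3 / 6 + ε ^ 4 * u * h1 (ε * u) + c1 * (c2 / 2 + c3 * u / 6 + u ^ 2 * c u)
      + u * (c2 / 2 + c3 * u / 6 + u ^ 2 * c u) ^ 2 / 2 with hTYf
  set TZf : ℝ → ℝ := fun u =>
    b30 * ε ^ 3 / 6 + ε ^ 4 * u * h2 (ε * u)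
      + b12 * ε * (c1 + c2 * u / 2 + c3 * u ^ 2 / 6 + u ^ 3 * c u) ^ 2 / 2
      + b03 * (c1 + c2 * u / 2 + c3 * u ^ 2 / 6 + u ^ 3 * c u) ^ 3 / 6
      + ε ^ 2 * u * (c1 + c2 * u / 2 + c3 * u ^ 2 / 6 + u ^ 3 * c u) ^ 2 * h3 (ε * u)
      + ε * u * (c1 + c2 * u / 2 + c3 * u ^ 2 / 6 + u ^ 3 * c u) ^ 3 * h4 (ε * u)
      + u * (c1 + c2 * u / 2 + c3 * u ^ 2 / 6 + u ^ 3 * c u) ^ 4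
          * h5 (ε * u, c1 * u + c2 * u ^ 2 / 2 + c3 * u ^ 3 / 6 + u ^ 4 * c u) with hTZf
  have hTYs : ContDiff ℝ (⊤ : ℕ∞) TYf := by rw [hTYf]; fun_prop (disch := norm_num)
  have hTZs : ContDiff ℝ (⊤ : ℕ∞) TZf := by rw [hTZf]; fun_prop (disch := norm_num)
  obtain ⟨Xd, hX1, hX2, hX0⟩ := key_s15 ε 0 (fun _ => (0 : ℝ)) (fun u => bh u 0) contDiff_const
    (by intro u; simp only [hbh, hb, hf]; simp; try ring)
  obtain ⟨Yd, hY1, hY2, hY0⟩ := key_s15 0 BY TYf (fun u => bh u 1) hTYs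
    (by intro u; simp only [hbh, hb, hf, hBY, hTYf]; simp; try ring)
  obtain ⟨Zd, hZ1, hZ2, hZ0⟩ := key_s15 0 BZ TZf (fun u => bh u 2) hTZs
    (by intro u; simp only [hbh, hb, hf, hBZ, hTZf]; simp; try ring)
  have hD1 : ∀ u, HasDerivAt bh (![Xd u, Yd u, Zd u]) u := by
    intro u
    rw [hasDerivAt_pi]
    intro i
    fin_cases i
    · simpa using hX1 u
    · simpa using hY1 u
    · simpa using hZ1 u
  have hdbh : deriv bh = fun u => ![Xd u, Yd u, Zd u] := funext fun u => (hD1 u).deriv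
  have hD2 : HasDerivAt (fun u => ![Xd u, Yd u, Zd u]) ![0, BY, BZ] 0 := by
    rw [hasDerivAt_pi]
    intro i
    fin_cases i
    · simpa using hX2
    · simpa using hY2
    · simpa using hZ2
  have e1 : deriv bh 0 = ![ε, 0, 0] := by
    rw [hdbh]; simp only [hX0, hY0, hZ0]
  have e2 : iteratedDeriv 2 bh 0 = ![0, BY, BZ] := by
    have h22 : iteratedDeriv 2 bh = deriv (deriv bh) := by
      rw [show (2 : ℕ) = 1 + 1 from rfl, iteratedDeriv_succ, iteratedDeriv_one]
    rw [h22, hdbh]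
    exact hD2.deriv
  rw [e1, e2]
  have hden : n3 ![ε, 0, 0] = 1 := by
    simp [n3, hε2]
  have hnum : n3 (cp3 ![ε, 0, 0] ![0, BY, BZ]) = Real.sqrt (b20 ^ 2 + (c1 ^ 2 + a20) ^ 2) := by
    rw [cp3, cross_apply]
    simp only [n3]
    simp only [Matrix.cons_val_zero, Matrix.cons_val_one, Matrix.head_cons,
      Matrix.cons_val_two, Matrix.tail_cons]
    have hBY1 : BY = a20 + c1 ^ 2 := by rw [hBY, hε2]; ring
    have hBZ1 : BZ = b20 := by rw [hBZ, hε2]; ring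
    rw [hBY1, hBZ1]
    congr 1
    linear_combination (b20 ^ 2 + (a20 + c1 ^ 2) ^ 2) * hε2
  rw [hnum, hden]
  norm_num
end

section
/- With f the normal form of a cuspidal edge and b(u) = (εu, c₁u + c₂u²/2 + c₃u³/6 + O(u⁴)), ε = ±1, the torsion of b̂ = f∘b at u = 0 equals τ(0) = [(c₁² + a₂₀)(ε b₀₃c₁³ + 3b₁₂c₁² + b₃₀) − b₂₀(3εc₁c₂ + a₃₀)] / [b₂₀² + (c₁² + a₂₀)²], provided b₂₀² + (c₁² + a₂₀)² ≠ 0. -/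
open scoped ContDiff


private lemma deriv_eq_of' (F G : ℝ → ℝ) (h : ∀ u, HasDerivAt F (G u) u) : deriv F = G :=
  funext fun u => (h u).deriv

private lemma key_s16 (A1 A2 A3 : ℝ) (g F : ℝ → ℝ) (hg : ContDiff ℝ ∞ g)
    (hF : F = fun u => A1*u + A2*u^2/2 + A3*u^3/6 + u^4 * g u) :
    deriv F 0 = A1 ∧ iteratedDeriv 2 F 0 = A2 ∧ iteratedDeriv 3 F 0 = A3 ∧ ContDiff ℝ ∞ F := by
  have hone : (1 : WithTop ℕ∞) ≤ ∞ := by exact_mod_cast le_top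
  have hg' : ContDiff ℝ ∞ (deriv g) := (contDiff_infty_iff_deriv.mp hg).2
  set g1 : ℝ → ℝ := fun u => 4 * g u + u * deriv g u with hg1def
  have hgc1 : ContDiff ℝ ∞ g1 := by fun_prop
  have hg1' : ContDiff ℝ ∞ (deriv g1) := (contDiff_infty_iff_deriv.mp hgc1).2
  set g2 : ℝ → ℝ := fun u => 3 * g1 u + u * deriv g1 u with hg2def
  have hgc2 : ContDiff ℝ ∞ g2 := by fun_prop
  have hg2' : ContDiff ℝ ∞ (deriv g2) := (contDiff_infty_iff_deriv.mp hgc2).2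
  set g3 : ℝ → ℝ := fun u => 2 * g2 u + u * deriv g2 u with hg3def
  have hd1 : deriv F = fun u => A1 + A2*u + A3*u^2/2 + u^3 * g1 u := by
    apply deriv_eq_of'
    intro u
    rw [hF]
    have h := ((((hasDerivAt_id u).const_mul A1).add
        (((hasDerivAt_pow 2 u).const_mul A2).div_const 2)).add
        (((hasDerivAt_pow 3 u).const_mul A3).div_const 6)).add
        ((hasDerivAt_pow 4 u).mul (hg.differentiable (by simp) u).hasDerivAt)
    refine h.congr_deriv ?_
    push_cast
    simp only [hg1def]
    ring
  have hd2 : deriv (deriv F) = fun u => A2 + A3*u + u^2 * g2 u := by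
    rw [hd1]
    apply deriv_eq_of'
    intro u
    have h := (((hasDerivAt_const u A1).add ((hasDerivAt_id u).const_mul A2)).add
        (((hasDerivAt_pow 2 u).const_mul A3).div_const 2)).add
        ((hasDerivAt_pow 3 u).mul (hgc1.differentiable (by simp) u).hasDerivAt)
    refine h.congr_deriv ?_
    push_cast
    simp only [hg2def]
    ring
  have hd3 : deriv (deriv (deriv F)) = fun u => A3 + u * g3 u := by
    rw [hd2]
    apply deriv_eq_of'
    intro u
    have h := ((hasDerivAt_const u A2).add ((hasDerivAt_id u).const_mul A3)).add
        ((hasDerivAt_pow 2 u).mul (hgc2.differentiable (by simp) u).hasDerivAt)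
    refine h.congr_deriv ?_
    push_cast
    simp only [hg3def]
    ring
  refine ⟨?_, ?_, ?_, ?_⟩
  · rw [hd1]; simp
  · rw [show (2:ℕ) = 0 + 1 + 1 from rfl, iteratedDeriv_succ, iteratedDeriv_succ,
      iteratedDeriv_zero, hd2]
    simp
  · rw [show (3:ℕ) = 0 + 1 + 1 + 1 from rfl, iteratedDeriv_succ, iteratedDeriv_succ,
      iteratedDeriv_succ, iteratedDeriv_zero, hd3]
    simp
  · rw [hF]
    apply ContDiff.add
    apply ContDiff.add
    apply ContDiff.add
    · fun_prop
    · exact (contDiff_const.mul (contDiff_id.pow 2)).div_const 2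
    · exact (contDiff_const.mul (contDiff_id.pow 3)).div_const 6
    · fun_prop

private lemma iteratedDeriv_proj (f : ℝ → Fin 3 → ℝ) (hf : ContDiff ℝ ∞ f) (n : ℕ) (x : ℝ)
    (i : Fin 3) : iteratedDeriv n f x i = iteratedDeriv n (fun u => f u i) x := by
  have h := (ContinuousLinearMap.proj (R := ℝ) (φ := fun _ : Fin 3 => ℝ) i).iteratedFDeriv_comp_left
      (hf.contDiffAt (x := x)) (by exact_mod_cast le_top : (n : WithTop ℕ∞) ≤ ∞)
  rw [iteratedDeriv_eq_iteratedFDeriv, iteratedDeriv_eq_iteratedFDeriv,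
    show (fun u => f u i) = (ContinuousLinearMap.proj (R := ℝ) (φ := fun _ : Fin 3 => ℝ) i) ∘ f
      from rfl, h]
  rfl


theorem stmt16 (a20 a30 b20 b30 b12 b03 ε c1 c2 c3 : ℝ)
    (h1 h2 h3 h4 : ℝ → ℝ) (h5 : ℝ × ℝ → ℝ) (c : ℝ → ℝ)
    (hsm1 : ContDiff ℝ (⊤ : ℕ∞) h1) (hsm2 : ContDiff ℝ (⊤ : ℕ∞) h2) (hsm3 : ContDiff ℝ (⊤ : ℕ∞) h3)
    (hsm4 : ContDiff ℝ (⊤ : ℕ∞) h4) (hsm5 : ContDiff ℝ (⊤ : ℕ∞) h5) (hsmc : ContDiff ℝ (⊤ : ℕ∞) c)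
    (hb03 : b03 ≠ 0) (hb20 : 0 ≤ b20) (hε : ε = 1 ∨ ε = -1)
    (hden : b20 ^ 2 + (c1 ^ 2 + a20) ^ 2 ≠ 0)
    (f : ℝ × ℝ → Fin 3 → ℝ)
    (hf : ∀ u v, f (u, v) =
      ![u,
        a20 * u ^ 2 / 2 + a30 * u ^ 3 / 6 + v ^ 2 / 2 + u ^ 4 * h1 u,
        b20 * u ^ 2 / 2 + b30 * u ^ 3 / 6 + b12 * u * v ^ 2 / 2 + b03 * v ^ 3 / 6 +
          u ^ 4 * h2 u + u ^ 2 * v ^ 2 * h3 u + u * v ^ 3 * h4 u + v ^ 4 * h5 (u, v)])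
    (b : ℝ → ℝ × ℝ)
    (hb : ∀ u, b u = (ε * u, c1 * u + c2 * u ^ 2 / 2 + c3 * u ^ 3 / 6 + u ^ 4 * c u))
    (bh : ℝ → Fin 3 → ℝ) (hbh : ∀ u, bh u = f (b u)) :
    det3 (deriv bh 0) (iteratedDeriv 2 bh 0) (iteratedDeriv 3 bh 0) /
        (n3 (cp3 (deriv bh 0) (iteratedDeriv 2 bh 0))) ^ 2 =
      ((c1 ^ 2 + a20) * (ε * b03 * c1 ^ 3 + 3 * b12 * c1 ^ 2 + b30) -
          b20 * (3 * ε * c1 * c2 + a30)) /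
        (b20 ^ 2 + (c1 ^ 2 + a20) ^ 2) := by
  have hone : (1 : WithTop ℕ∞) ≤ ∞ := by exact_mod_cast le_top
  have hs1 : ContDiff ℝ ∞ h1 := hsm1.of_le (by simp)
  have hs2 : ContDiff ℝ ∞ h2 := hsm2.of_le (by simp)
  have hs3 : ContDiff ℝ ∞ h3 := hsm3.of_le (by simp)
  have hs4 : ContDiff ℝ ∞ h4 := hsm4.of_le (by simp)
  have hs5 : ContDiff ℝ ∞ h5 := hsm5.of_le (by simp)
  have hsc : ContDiff ℝ ∞ c := hsmc.of_le (by simp)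
  have harg : ContDiff ℝ ∞ (fun u : ℝ => (c1 * u + c2 * u ^ 2 / 2 + c3 * u ^ 3 / 6 + u ^ 4 * c u)) := by
    refine ((ContDiff.add (ContDiff.add ?_ ?_) ?_).add ?_)
    · exact contDiff_const.mul contDiff_id
    · exact (contDiff_const.mul (contDiff_id.pow 2)).div_const 2
    · exact (contDiff_const.mul (contDiff_id.pow 3)).div_const 6
    · exact (contDiff_id.pow 4).mul hsc
  have h5c : ContDiff ℝ ∞ (fun u : ℝ => h5 (ε*u, (c1 * u + c2 * u ^ 2 / 2 + c3 * u ^ 3 / 6 + u ^ 4 * c u))) :=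
    hs5.comp (ContDiff.prodMk (contDiff_const.mul contDiff_id) harg)
  obtain ⟨dx1, dx2, dx3, cdx⟩ := key_s16 ε 0 0 (fun _ => (0:ℝ)) (fun u => bh u 0) contDiff_const
    (by
      funext u
      rw [hbh, hb u, hf]
      simp only [Matrix.cons_val_zero]
      ring)
  obtain ⟨dy1, dy2, dy3, cdy⟩ := key_s16 0 (c1^2 + a20) (ε*a30 + 3*c1*c2)
    (fun u => (1/2)*(2*c1*(c3/6 + u*(c u)) + (1/2)*c2*(c2/2 + (c3/6)*u + u^2*(c u)) + u*(c2/2 + (c3/6)*u + u^2*(c u))*(c3/6 + u*(c u))) + h1 (ε*u)) (fun u => bh u 1)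
    (by fun_prop)
    (by
      funext u
      rw [hbh, hb u, hf]
      simp only [Matrix.cons_val_one, Matrix.head_cons, Matrix.cons_val_zero]
      rcases hε with rfl | rfl <;> ring)
  obtain ⟨dz1, dz2, dz3, cdz⟩ := key_s16 0 b20 (ε*b30 + 3*ε*b12*c1^2 + b03*c1^3)
    (fun u => (1/2)*(ε*b12*(((c1 + u*(c2/2 + (c3/6)*u + u^2*(c u))) + c1)*(c2/2 + (c3/6)*u + u^2*(c u)))) + (1/6)*(b03*((c2/2 + (c3/6)*u + u^2*(c u))*((c1 + u*(c2/2 + (c3/6)*u + u^2*(c u)))^2 + c1*(c1 + u*(c2/2 + (c3/6)*u + u^2*(c u))) + c1^2))) + h2 (ε*u) + (c1 + u*(c2/2 + (c3/6)*u + u^2*(c u)))^2 * h3 (ε*u) + ε*(c1 + u*(c2/2 + (c3/6)*u + u^2*(c u)))^3 * h4 (ε*u) + (c1 + u*(c2/2 + (c3/6)*u + u^2*(c u)))^4 * h5 (ε*u, (c1 * u + c2 * u ^ 2 / 2 + c3 * u ^ 3 / 6 + u ^ 4 * c u))) (fun u => bh u 2)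
    (by fun_prop)
    (by
      funext u
      rw [hbh, hb u, hf]
      simp only [Matrix.cons_val_two, Matrix.tail_cons, Matrix.head_cons]
      rcases hε with rfl | rfl <;> ring)
  have cbh : ContDiff ℝ ∞ bh := by
    rw [contDiff_pi]
    intro i
    fin_cases i
    exacts [cdx, cdy, cdz]
  have hproj : ∀ (n : ℕ) (i : Fin 3),
      iteratedDeriv n bh 0 i = iteratedDeriv n (fun u => bh u i) 0 :=
    fun n i => iteratedDeriv_proj bh cbh n 0 i
  have hd : ∀ i : Fin 3, deriv bh 0 i = deriv (fun u => bh u i) 0 := by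
    intro i
    rw [← iteratedDeriv_one, hproj 1 i, iteratedDeriv_one]
  have e10 : deriv bh 0 0 = ε := by rw [hd]; exact dx1
  have e11 : deriv bh 0 1 = 0 := by rw [hd]; exact dy1
  have e12 : deriv bh 0 2 = 0 := by rw [hd]; exact dz1
  have e20 : iteratedDeriv 2 bh 0 0 = 0 := by rw [hproj]; exact dx2
  have e21 : iteratedDeriv 2 bh 0 1 = c1^2 + a20 := by rw [hproj]; exact dy2
  have e22 : iteratedDeriv 2 bh 0 2 = b20 := by rw [hproj]; exact dz2
  have e30 : iteratedDeriv 3 bh 0 0 = 0 := by rw [hproj]; exact dx3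
  have e31 : iteratedDeriv 3 bh 0 1 = ε*a30 + 3*c1*c2 := by rw [hproj]; exact dy3
  have e32 : iteratedDeriv 3 bh 0 2 = ε*b30 + 3*ε*b12*c1^2 + b03*c1^3 := by rw [hproj]; exact dz3
  have hNUM : det3 (deriv bh 0) (iteratedDeriv 2 bh 0) (iteratedDeriv 3 bh 0)
      = ε * ((c1^2 + a20) * (ε*b30 + 3*ε*b12*c1^2 + b03*c1^3) - b20 * (ε*a30 + 3*c1*c2)) := by
    simp [det3, Matrix.det_fin_three, e10, e11, e12, e20, e21, e22, e30, e31, e32]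
    ring
  have hDEN : (n3 (cp3 (deriv bh 0) (iteratedDeriv 2 bh 0)))^2 = b20^2 + (c1^2 + a20)^2 := by
    simp only [cp3, cross_apply, n3]
    rw [Real.sq_sqrt (by positivity)]
    simp only [Matrix.cons_val_zero, Matrix.cons_val_one, Matrix.head_cons,
      Matrix.cons_val_two, Matrix.tail_cons]
    rw [e10, e11, e12, e20, e21, e22]
    rcases hε with rfl | rfl <;> ring
  rw [hNUM, hDEN]
  have hnum2 : ε * ((c1^2 + a20) * (ε*b30 + 3*ε*b12*c1^2 + b03*c1^3) - b20 * (ε*a30 + 3*c1*c2))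
      = (c1 ^ 2 + a20) * (ε * b03 * c1 ^ 3 + 3 * b12 * c1 ^ 2 + b30) -
          b20 * (3 * ε * c1 * c2 + a30) := by
    rcases hε with rfl | rfl <;> ring
  rw [hnum2]
end

section
/- Let f be the normal form of a cuspidal edge with limiting normal curvature b₂₀ ≠ 0, and let b(u) = (εu, c₁u + O(u²)) be a boundary transverse to ker df₀. The principal normal direction of b̂ = f∘b at 0 is proportional to n = (0, c₁² + a₂₀, b₂₀). Let ℓ = {(0, y, b₂₀) : y ∈ ℝ} be the line containing the curvature parabola Δ₀ = {(0, a₂₀ + t², b₂₀)} and V = (0, a₂₀, b₂₀) its vertex. Then the line through 0 in direction n meets ℓ in exactly one point P, and the distance |V − P| equals c₁². -/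
open scoped ContDiff

noncomputable def dot3 (a b : Fin 3 → ℝ) : ℝ := a 0 * b 0 + a 1 * b 1 + a 2 * b 2

lemma lemA (c : ℝ) (g : ℝ → ℝ) (hg : ContDiff ℝ (⊤ : ℕ∞) g) (u : ℝ) :
    HasDerivAt (fun x => c*x + x^2*g x) (c + u*(2*g u + u*deriv g u)) u := by
  have h1 : HasDerivAt (fun x : ℝ => c*x) c u := by
    simpa using (hasDerivAt_id u).const_mul c
  have h2 : HasDerivAt (fun x : ℝ => x^2*g x) (((2:ℕ):ℝ)*u^1*g u + u^2*deriv g u) u :=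
    (hasDerivAt_pow 2 u).mul ((hg.differentiable (by simp) u).hasDerivAt)
  refine (h1.add h2).congr_deriv ?_
  push_cast; ring

lemma lemB (c : ℝ) (g : ℝ → ℝ) (hg : ContDiff ℝ (⊤ : ℕ∞) g) :
    HasDerivAt (fun x => c + x*(2*g x + x*deriv g x)) (2*g 0) 0 := by
  have hg1 : ContDiff ℝ ∞ g := hg.of_le (by simp)
  have hg' : ContDiff ℝ ∞ (deriv g) := (contDiff_infty_iff_deriv.mp hg1).2
  set H : ℝ → ℝ := fun x => 2*g x + x*deriv g x with hH
  have hHc : ContDiff ℝ ∞ H := (contDiff_const.mul hg1).add (contDiff_id.mul hg')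
  have h := ((hasDerivAt_id 0).mul ((hHc.differentiable (by norm_num) 0).hasDerivAt)).const_add c
  refine h.congr_deriv ?_
  simp [hH]

theorem stmt18 (a20 a30 b20 b30 b12 b03 ε c1 : ℝ)
    (h1 h2 h3 h4 : ℝ → ℝ) (h5 : ℝ × ℝ → ℝ) (r : ℝ → ℝ)
    (hsm1 : ContDiff ℝ (⊤ : ℕ∞) h1) (hsm2 : ContDiff ℝ (⊤ : ℕ∞) h2) (hsm3 : ContDiff ℝ (⊤ : ℕ∞) h3)
    (hsm4 : ContDiff ℝ (⊤ : ℕ∞) h4) (hsm5 : ContDiff ℝ (⊤ : ℕ∞) h5) (hsmr : ContDiff ℝ (⊤ : ℕ∞) r)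
    (hb03 : b03 ≠ 0) (hb20 : b20 ≠ 0) (hε : ε = 1 ∨ ε = -1)
    (f : ℝ × ℝ → Fin 3 → ℝ)
    (hf : ∀ u v, f (u, v) =
      ![u,
        a20 * u ^ 2 / 2 + a30 * u ^ 3 / 6 + v ^ 2 / 2 + u ^ 4 * h1 u,
        b20 * u ^ 2 / 2 + b30 * u ^ 3 / 6 + b12 * u * v ^ 2 / 2 + b03 * v ^ 3 / 6 +
          u ^ 4 * h2 u + u ^ 2 * v ^ 2 * h3 u + u * v ^ 3 * h4 u + v ^ 4 * h5 (u, v)])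
    (b : ℝ → ℝ × ℝ) (hb : ∀ u, b u = (ε * u, c1 * u + u ^ 2 * r u))
    (bh : ℝ → Fin 3 → ℝ) (hbh : ∀ u, bh u = f (b u))
    (T : Fin 3 → ℝ) (hT : T = (n3 (deriv bh 0))⁻¹ • deriv bh 0)
    (n V : Fin 3 → ℝ)
    (hn : n = ![0, c1 ^ 2 + a20, b20]) (hV : V = ![0, a20, b20]) :
    -- the principal normal direction of `b̂` at `0` is proportional to `n`,
    (∃ k : ℝ, k ≠ 0 ∧
      iteratedDeriv 2 bh 0 - (dot3 (iteratedDeriv 2 bh 0) T) • T = k • n) ∧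
    -- the line through `0` in direction `n` meets `ℓ = {(0,y,b20)}` in exactly one point,
    (∃! P : Fin 3 → ℝ, (∃ s : ℝ, P = s • n) ∧ (∃ y : ℝ, P = ![0, y, b20])) ∧
    -- and for that intersection point `P`, the distance `|V - P|` equals `c₁²`.
    (∀ P : Fin 3 → ℝ, ((∃ s : ℝ, P = s • n) ∧ (∃ y : ℝ, P = ![0, y, b20])) →
      n3 (V - P) = c1 ^ 2) := by
  have hε2 : ε ^ 2 = 1 := by rcases hε with h | h <;> rw [h] <;> norm_num
  set g0 : ℝ → ℝ := fun _ => 0 with hg0def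
  set g1 : ℝ → ℝ := fun u =>
    (a20*ε^2/2) + (a30*ε^3/6)*u + (1/2)*(c1 + u*r u)^2 + (ε^4)*u^2*h1 (ε*u) with hg1def
  set g2 : ℝ → ℝ := fun u =>
    (b20*ε^2/2) + (b30*ε^3/6)*u + (b12*ε/2)*u*(c1+u*r u)^2 + (b03/6)*u*(c1+u*r u)^3
      + (ε^4)*u^2*h2 (ε*u) + (ε^2)*u^2*(c1+u*r u)^2*h3 (ε*u)
      + ε*u^2*(c1+u*r u)^3*h4 (ε*u)
      + u^2*(c1+u*r u)^4*h5 (ε*u, c1*u+u^2*r u) with hg2def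
  have hcg0 : ContDiff ℝ (⊤ : ℕ∞) g0 := contDiff_const
  have hcg1 : ContDiff ℝ (⊤ : ℕ∞) g1 := by rw [hg1def]; fun_prop
  have hcg2 : ContDiff ℝ (⊤ : ℕ∞) g2 := by rw [hg2def]; fun_prop
  have hbh' : bh = fun u => ![ε*u + u^2*g0 u, 0*u + u^2*g1 u, 0*u + u^2*g2 u] := by
    funext u
    rw [hbh u, hb u, hf]
    funext i
    fin_cases i <;>
      simp only [hg0def, hg1def, hg2def, Matrix.cons_val_zero, Matrix.cons_val_one,
        Matrix.head_cons, Matrix.cons_val_two, Matrix.tail_cons, Fin.isValue] <;> ring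
  have hderiv : deriv bh = fun u =>
      ![ε + u*(2*g0 u + u*deriv g0 u), 0 + u*(2*g1 u + u*deriv g1 u),
        0 + u*(2*g2 u + u*deriv g2 u)] := by
    funext u
    apply HasDerivAt.deriv
    rw [hbh']
    rw [hasDerivAt_pi]
    intro i
    fin_cases i <;>
      simp only [Matrix.cons_val_zero, Matrix.cons_val_one, Matrix.head_cons,
        Matrix.cons_val_two, Matrix.tail_cons, Fin.isValue]
    · exact lemA ε g0 hcg0 u
    · exact lemA 0 g1 hcg1 u
    · exact lemA 0 g2 hcg2 u
  have hd2 : iteratedDeriv 2 bh 0 = ![0, 2*g1 0, 2*g2 0] := by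
    rw [show (2:ℕ) = 1 + 1 from rfl, iteratedDeriv_succ, iteratedDeriv_one]
    apply HasDerivAt.deriv
    rw [hderiv, hasDerivAt_pi]
    intro i
    fin_cases i <;>
      simp only [Matrix.cons_val_zero, Matrix.cons_val_one, Matrix.head_cons,
        Matrix.cons_val_two, Matrix.tail_cons, Fin.isValue]
    · simpa [hg0def] using lemB ε g0 hcg0
    · simpa using lemB 0 g1 hcg1
    · simpa using lemB 0 g2 hcg2
  have hg10 : 2 * g1 0 = c1^2 + a20 := by
    rw [hg1def]; simp; linear_combination a20 * hε2
  have hg20 : 2 * g2 0 = b20 := by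
    rw [hg2def]; simp; linear_combination b20 * hε2
  have hd2' : iteratedDeriv 2 bh 0 = ![0, c1^2 + a20, b20] := by
    rw [hd2, hg10, hg20]
  have hderiv0 : deriv bh 0 = ![ε, 0, 0] := by
    rw [hderiv]
    funext i; fin_cases i <;> simp
  have hT' : T = ![ε, 0, 0] := by
    rw [hT, hderiv0]
    have : n3 ![ε, 0, 0] = 1 := by
      simp [n3, hε2]
    rw [this]; simp
  constructor
  · refine ⟨1, one_ne_zero, ?_⟩
    have hdot : dot3 (iteratedDeriv 2 bh 0) T = 0 := by
      rw [hd2', hT', dot3]; simp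
    rw [hdot, hd2', hn]
    funext i; fin_cases i <;> simp
  constructor
  · refine ⟨n, ⟨⟨1, by simp⟩, ⟨c1^2 + a20, hn⟩⟩, ?_⟩
    rintro P ⟨⟨s, rfl⟩, ⟨y, hy⟩⟩
    have h2' : s * b20 = b20 := by
      have := congrFun hy 2
      simp [hn] at this
      simpa using this
    have hs : s = 1 := mul_right_cancel₀ hb20 (by rw [h2', one_mul])
    rw [hs, one_smul]
  · rintro P ⟨⟨s, rfl⟩, ⟨y, hy⟩⟩
    have h2' : s * b20 = b20 := by
      have := congrFun hy 2
      simp [hn] at this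
      simpa using this
    have hs : s = 1 := mul_right_cancel₀ hb20 (by rw [h2', one_mul])
    rw [hs, one_smul]
    have : V - n = ![0, -c1^2, 0] := by
      rw [hV, hn]; funext i; fin_cases i <;> simp <;> ring
    rw [this]
    simp only [n3, Matrix.cons_val_zero, Matrix.cons_val_one, Matrix.head_cons,
      Matrix.cons_val_two, Matrix.tail_cons]
    rw [show (0:ℝ)^2 + (-c1^2)^2 + 0^2 = (c1^2)^2 by ring]
    exact Real.sqrt_sq (sq_nonneg c1)
end

section
/- Let f be the normal form of a cuspidal edge and b(v) = (d₂v²/2 + d₃v³/6 + O(v⁴), εv), ε = ±1, a boundary curve with b'(0) ∈ ker df₀. Then b̂ = f∘b satisfies b̂'(0) = 0, b̂''(0) ≠ 0, and the cuspidal curvature of b̂ at 0 is κ_sing = √(b₀₃²(1 + d₂²) + d₃²) / (1 + d₂²)^{5/4}. -/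
private lemma cd_deriv {R : ℝ → ℝ} (hR : ContDiff ℝ (⊤:ℕ∞) R) : ContDiff ℝ (⊤:ℕ∞) (deriv R) :=
  (contDiff_infty_iff_deriv.mp hR).2

private lemma stepA (c2 c3 : ℝ) {R : ℝ → ℝ} (hR : Differentiable ℝ R) :
    deriv (fun v => c2*v^2/2 + c3*v^3/6 + v^4*R v)
      = fun v => c2*v + c3*v^2/2 + v^3*(4*R v + v*deriv R v) := by
  funext v
  have h2 : HasDerivAt (fun v : ℝ => v^2) (2*v) v := by simpa using hasDerivAt_pow 2 v
  have h3 : HasDerivAt (fun v : ℝ => v^3) (3*v^2) v := by simpa using hasDerivAt_pow 3 v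
  have h4 : HasDerivAt (fun v : ℝ => v^4) (4*v^3) v := by simpa using hasDerivAt_pow 4 v
  have h := (((h2.const_mul c2).div_const 2).add ((h3.const_mul c3).div_const 6)).add
      (h4.mul (hR v).hasDerivAt)
  have h' : HasDerivAt (fun v => c2*v^2/2 + c3*v^3/6 + v^4*R v)
      (c2*v + c3*v^2/2 + v^3*(4*R v + v*deriv R v)) v := by
    exact h.congr_deriv (by ring)
  exact h'.deriv

private lemma stepB (c2 c3 : ℝ) {R : ℝ → ℝ} (hR : Differentiable ℝ R) :
    deriv (fun v => c2*v + c3*v^2/2 + v^3*R v)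
      = fun v => c2 + c3*v + v^2*(3*R v + v*deriv R v) := by
  funext v
  have h1 : HasDerivAt (fun v : ℝ => v) 1 v := hasDerivAt_id v
  have h2 : HasDerivAt (fun v : ℝ => v^2) (2*v) v := by simpa using hasDerivAt_pow 2 v
  have h3 : HasDerivAt (fun v : ℝ => v^3) (3*v^2) v := by simpa using hasDerivAt_pow 3 v
  have h := ((h1.const_mul c2).add ((h2.const_mul c3).div_const 2)).add
      (h3.mul (hR v).hasDerivAt)
  have h' : HasDerivAt (fun v => c2*v + c3*v^2/2 + v^3*R v)
      (c2 + c3*v + v^2*(3*R v + v*deriv R v)) v := by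
    exact h.congr_deriv (by ring)
  exact h'.deriv

private lemma stepC (c2 c3 : ℝ) {R : ℝ → ℝ} (hR : Differentiable ℝ R) :
    deriv (fun v => c2 + c3*v + v^2*R v)
      = fun v => c3 + v*(2*R v + v*deriv R v) := by
  funext v
  have h1 : HasDerivAt (fun v : ℝ => v) 1 v := hasDerivAt_id v
  have h2 : HasDerivAt (fun v : ℝ => v^2) (2*v) v := by simpa using hasDerivAt_pow 2 v
  have h := ((hasDerivAt_const v c2).add (h1.const_mul c3)).add (h2.mul (hR v).hasDerivAt)
  have h' : HasDerivAt (fun v => c2 + c3*v + v^2*R v)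
      (c3 + v*(2*R v + v*deriv R v)) v := by
    exact h.congr_deriv (by ring)
  exact h'.deriv

private lemma deriv_pi3 {g0 g1 g2 : ℝ → ℝ} (h0 : Differentiable ℝ g0)
    (h1 : Differentiable ℝ g1) (h2 : Differentiable ℝ g2) :
    deriv (fun v => ![g0 v, g1 v, g2 v]) = fun v => ![deriv g0 v, deriv g1 v, deriv g2 v] := by
  funext v
  have h : HasDerivAt (fun v => ![g0 v, g1 v, g2 v]) (![deriv g0 v, deriv g1 v, deriv g2 v]) v := by
    rw [hasDerivAt_pi]
    intro i
    fin_cases i <;> simp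
    exacts [h0 v, h1 v, h2 v]
  exact h.deriv

private lemma master (c2a c3a c2b c3b c2c c3c : ℝ) {Ra Rb Rc : ℝ → ℝ}
    (ha : ContDiff ℝ (⊤:ℕ∞) Ra) (hb : ContDiff ℝ (⊤:ℕ∞) Rb) (hc : ContDiff ℝ (⊤:ℕ∞) Rc)
    {F : ℝ → Fin 3 → ℝ}
    (hF : F = fun v => ![c2a*v^2/2 + c3a*v^3/6 + v^4*Ra v,
        c2b*v^2/2 + c3b*v^3/6 + v^4*Rb v,
        c2c*v^2/2 + c3c*v^3/6 + v^4*Rc v]) :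
    deriv F 0 = 0 ∧ iteratedDeriv 2 F 0 = ![c2a, c2b, c2c] ∧
      iteratedDeriv 3 F 0 = ![c3a, c3b, c3c] := by
  have ha' := cd_deriv ha; have hb' := cd_deriv hb; have hc' := cd_deriv hc
  have ha0 : Differentiable ℝ Ra := ha.differentiable (by simp)
  have hb0 : Differentiable ℝ Rb := hb.differentiable (by simp)
  have hc0 : Differentiable ℝ Rc := hc.differentiable (by simp)
  -- level-1 remainders
  have ha0' : Differentiable ℝ (deriv Ra) := ha'.differentiable (by simp)
  have hb0' : Differentiable ℝ (deriv Rb) := hb'.differentiable (by simp)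
  have hc0' : Differentiable ℝ (deriv Rc) := hc'.differentiable (by simp)
  have hRa1 : ContDiff ℝ (⊤:ℕ∞) (fun v => 4*Ra v + v*deriv Ra v) := by fun_prop
  have hRb1 : ContDiff ℝ (⊤:ℕ∞) (fun v => 4*Rb v + v*deriv Rb v) := by fun_prop
  have hRc1 : ContDiff ℝ (⊤:ℕ∞) (fun v => 4*Rc v + v*deriv Rc v) := by fun_prop
  have hRa1' := cd_deriv hRa1; have hRb1' := cd_deriv hRb1; have hRc1' := cd_deriv hRc1
  have hRa1d : Differentiable ℝ (deriv (fun v => 4*Ra v + v*deriv Ra v)) := hRa1'.differentiable (by simp)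
  have hRb1d : Differentiable ℝ (deriv (fun v => 4*Rb v + v*deriv Rb v)) := hRb1'.differentiable (by simp)
  have hRc1d : Differentiable ℝ (deriv (fun v => 4*Rc v + v*deriv Rc v)) := hRc1'.differentiable (by simp)
  have hRa2 : ContDiff ℝ (⊤:ℕ∞) (fun v => 3*(4*Ra v + v*deriv Ra v)
      + v*deriv (fun v => 4*Ra v + v*deriv Ra v) v) := by fun_prop
  have hRb2 : ContDiff ℝ (⊤:ℕ∞) (fun v => 3*(4*Rb v + v*deriv Rb v)
      + v*deriv (fun v => 4*Rb v + v*deriv Rb v) v) := by fun_prop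
  have hRc2 : ContDiff ℝ (⊤:ℕ∞) (fun v => 3*(4*Rc v + v*deriv Rc v)
      + v*deriv (fun v => 4*Rc v + v*deriv Rc v) v) := by fun_prop
  have dF : deriv F = fun v => ![c2a*v + c3a*v^2/2 + v^3*(4*Ra v + v*deriv Ra v),
      c2b*v + c3b*v^2/2 + v^3*(4*Rb v + v*deriv Rb v),
      c2c*v + c3c*v^2/2 + v^3*(4*Rc v + v*deriv Rc v)] := by
    rw [hF, deriv_pi3 (by fun_prop) (by fun_prop) (by fun_prop)]
    simp only [stepA _ _ ha0, stepA _ _ hb0, stepA _ _ hc0]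
  have dF2 : deriv (deriv F) = fun v =>
      ![c2a + c3a*v + v^2*(3*(4*Ra v + v*deriv Ra v) + v*deriv (fun v => 4*Ra v + v*deriv Ra v) v),
        c2b + c3b*v + v^2*(3*(4*Rb v + v*deriv Rb v) + v*deriv (fun v => 4*Rb v + v*deriv Rb v) v),
        c2c + c3c*v + v^2*(3*(4*Rc v + v*deriv Rc v) + v*deriv (fun v => 4*Rc v + v*deriv Rc v) v)] := by
    rw [dF, deriv_pi3 (by fun_prop) (by fun_prop) (by fun_prop)]
    simp only [stepB _ _ (hRa1.differentiable (by simp)), stepB _ _ (hRb1.differentiable (by simp)),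
      stepB _ _ (hRc1.differentiable (by simp))]
  have dF3 : deriv (deriv (deriv F)) 0 = ![c3a, c3b, c3c] := by
    rw [dF2, deriv_pi3 (by fun_prop) (by fun_prop) (by fun_prop)]
    simp only [stepC _ _ (hRa2.differentiable (by simp)), stepC _ _ (hRb2.differentiable (by simp)),
      stepC _ _ (hRc2.differentiable (by simp))]
    norm_num
  refine ⟨?_, ?_, ?_⟩
  · rw [dF]
    funext i; fin_cases i <;> norm_num
  · rw [iteratedDeriv_eq_iterate]
    show deriv (deriv F) 0 = _
    rw [dF2]; norm_num
  · rw [iteratedDeriv_eq_iterate]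
    exact dF3

theorem stmt19 (a20 a30 b20 b30 b12 b03 ε d2 d3 : ℝ)
    (h1 h2 h3 h4 : ℝ → ℝ) (h5 : ℝ × ℝ → ℝ) (d : ℝ → ℝ)
    (hsm1 : ContDiff ℝ (⊤ : ℕ∞) h1) (hsm2 : ContDiff ℝ (⊤ : ℕ∞) h2) (hsm3 : ContDiff ℝ (⊤ : ℕ∞) h3)
    (hsm4 : ContDiff ℝ (⊤ : ℕ∞) h4) (hsm5 : ContDiff ℝ (⊤ : ℕ∞) h5) (hsmd : ContDiff ℝ (⊤ : ℕ∞) d)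
    (hb03 : b03 ≠ 0) (hb20 : 0 ≤ b20) (hε : ε = 1 ∨ ε = -1)
    (f : ℝ × ℝ → Fin 3 → ℝ)
    (hf : ∀ u v, f (u, v) =
      ![u,
        a20 * u ^ 2 / 2 + a30 * u ^ 3 / 6 + v ^ 2 / 2 + u ^ 4 * h1 u,
        b20 * u ^ 2 / 2 + b30 * u ^ 3 / 6 + b12 * u * v ^ 2 / 2 + b03 * v ^ 3 / 6 +
          u ^ 4 * h2 u + u ^ 2 * v ^ 2 * h3 u + u * v ^ 3 * h4 u + v ^ 4 * h5 (u, v)])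
    (b : ℝ → ℝ × ℝ)
    (hb : ∀ v, b v = (d2 * v ^ 2 / 2 + d3 * v ^ 3 / 6 + v ^ 4 * d v, ε * v))
    (bh : ℝ → Fin 3 → ℝ) (hbh : ∀ v, bh v = f (b v)) :
    deriv bh 0 = 0 ∧ iteratedDeriv 2 bh 0 ≠ 0 ∧
    n3 (cp3 (iteratedDeriv 2 bh 0) (iteratedDeriv 3 bh 0)) /
        (n3 (iteratedDeriv 2 bh 0)) ^ ((5 : ℝ) / 2) =
      Real.sqrt (b03 ^ 2 * (1 + d2 ^ 2) + d3 ^ 2) / (1 + d2 ^ 2) ^ ((5 : ℝ) / 4) := by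
  have hε2 : ε ^ 2 = 1 := by rcases hε with h | h <;> subst h <;> norm_num
  have hε3 : ε ^ 3 = ε := by rcases hε with h | h <;> subst h <;> norm_num
  have hsm1' : ContDiff ℝ (⊤:ℕ∞) h1 := hsm1.of_le (by simp)
  have hsm2' : ContDiff ℝ (⊤:ℕ∞) h2 := hsm2.of_le (by simp)
  have hsm3' : ContDiff ℝ (⊤:ℕ∞) h3 := hsm3.of_le (by simp)
  have hsm4' : ContDiff ℝ (⊤:ℕ∞) h4 := hsm4.of_le (by simp)
  have hsm5' : ContDiff ℝ (⊤:ℕ∞) h5 := hsm5.of_le (by simp)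
  have hsmd' : ContDiff ℝ (⊤:ℕ∞) d := hsmd.of_le (by simp)
  have hRb : ContDiff ℝ (⊤:ℕ∞) (fun v : ℝ =>
      a20*(d2/2 + d3*v/6 + v^2*d v)^2/2 + a30*v^2*(d2/2 + d3*v/6 + v^2*d v)^3/6
      + v^4*(d2/2 + d3*v/6 + v^2*d v)^4 * h1 (d2*v^2/2 + d3*v^3/6 + v^4*d v)) := by
    fun_prop (disch := norm_num)
  have hRc : ContDiff ℝ (⊤:ℕ∞) (fun v : ℝ =>
      b20*(d2/2 + d3*v/6 + v^2*d v)^2/2 + b30*v^2*(d2/2 + d3*v/6 + v^2*d v)^3/6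
      + b12*(d2/2 + d3*v/6 + v^2*d v)*ε^2/2
      + v^4*(d2/2 + d3*v/6 + v^2*d v)^4 * h2 (d2*v^2/2 + d3*v^3/6 + v^4*d v)
      + ε^2*v^2*(d2/2 + d3*v/6 + v^2*d v)^2 * h3 (d2*v^2/2 + d3*v^3/6 + v^4*d v)
      + ε^3*v*(d2/2 + d3*v/6 + v^2*d v) * h4 (d2*v^2/2 + d3*v^3/6 + v^4*d v)
      + ε^4 * h5 (d2*v^2/2 + d3*v^3/6 + v^4*d v, ε*v)) := by
    fun_prop (disch := norm_num)
  have hF : bh = fun v => ![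
      d2*v^2/2 + d3*v^3/6 + v^4*d v,
      (ε^2)*v^2/2 + (0:ℝ)*v^3/6 + v^4*(a20*(d2/2 + d3*v/6 + v^2*d v)^2/2
        + a30*v^2*(d2/2 + d3*v/6 + v^2*d v)^3/6
        + v^4*(d2/2 + d3*v/6 + v^2*d v)^4 * h1 (d2*v^2/2 + d3*v^3/6 + v^4*d v)),
      (0:ℝ)*v^2/2 + (ε^3*b03)*v^3/6 + v^4*(b20*(d2/2 + d3*v/6 + v^2*d v)^2/2
        + b30*v^2*(d2/2 + d3*v/6 + v^2*d v)^3/6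
        + b12*(d2/2 + d3*v/6 + v^2*d v)*ε^2/2
        + v^4*(d2/2 + d3*v/6 + v^2*d v)^4 * h2 (d2*v^2/2 + d3*v^3/6 + v^4*d v)
        + ε^2*v^2*(d2/2 + d3*v/6 + v^2*d v)^2 * h3 (d2*v^2/2 + d3*v^3/6 + v^4*d v)
        + ε^3*v*(d2/2 + d3*v/6 + v^2*d v) * h4 (d2*v^2/2 + d3*v^3/6 + v^4*d v)
        + ε^4 * h5 (d2*v^2/2 + d3*v^3/6 + v^4*d v, ε*v))] := by
    funext v
    rw [hbh v, hb v, hf]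
    funext i
    fin_cases i <;> simp <;> ring
  obtain ⟨k1, k2, k3⟩ := master d2 d3 (ε^2) 0 0 (ε^3*b03) hsmd' hRb hRc hF
  rw [hε2] at k2
  rw [hε3] at k3
  refine ⟨k1, ?_, ?_⟩
  · rw [k2]
    intro h
    have := congrFun h 1
    simp at this
  · rw [k2, k3]
    have hcp : cp3 ![d2, 1, 0] ![d3, 0, ε*b03]
        = ![ε*b03, -(d2*(ε*b03)), -d3] := by
      simp [cp3, cross_apply]
    rw [hcp]
    unfold n3
    simp only [Matrix.cons_val_zero, Matrix.cons_val_one, Matrix.head_cons,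
      Matrix.cons_val_two, Matrix.tail_cons]
    have hnum : (ε*b03)^2 + (-(d2*(ε*b03)))^2 + (-d3)^2 = b03^2*(1+d2^2) + d3^2 := by
      rcases hε with h | h <;> subst h <;> ring
    have hden : d2^2 + 1^2 + 0^2 = 1 + d2^2 := by ring
    rw [hnum, hden]
    congr 1
    rw [Real.sqrt_eq_rpow, ← Real.rpow_mul (by positivity : (0:ℝ) ≤ 1 + d2^2)]
    norm_num
end
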